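/- Let n be an odd positive integer and let u be a classical solution of (CH_n) on [0,T). Suppose there exist t* ∈ (0,T) and real numbers a < b such that F_{t*}(a) = F_{t*}(b) and f_{t*} vanishes identically on (a,b). Then f_{t*} is identically zero on ℝ (equivalently, u(t*,·) ≡ 0). -/

import Mathlib

open Real MeasureTheory Filter Topology
open scoped ENNReal

/-- The Green function `g(x) = e^{-|x|}/2` of `1 - ∂ₓ²` on `ℝ`. -/
noncomputable def g (x : ℝ) : ℝ := Real.exp (-|x|) / 2

/-- `u_x`. -/
noncomputable def ux (u : ℝ → ℝ → ℝ) (t x : ℝ) : ℝ := deriv (u t) x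
/-- `u_{xx}`. -/
noncomputable def uxx (u : ℝ → ℝ → ℝ) (t x : ℝ) : ℝ := deriv (deriv (u t)) x
/-- `u_{xxx}`. -/
noncomputable def uxxx (u : ℝ → ℝ → ℝ) (t x : ℝ) : ℝ := deriv (deriv (deriv (u t))) x
/-- `u_t`. -/
noncomputable def ut (u : ℝ → ℝ → ℝ) (t x : ℝ) : ℝ := deriv (fun s => u s x) t
/-- `u_{tx}`. -/
noncomputable def utx (u : ℝ → ℝ → ℝ) (t x : ℝ) : ℝ := deriv (fun s => ux u s x) t
/-- `u_{txx}`. -/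
noncomputable def utxx (u : ℝ → ℝ → ℝ) (t x : ℝ) : ℝ := deriv (fun s => uxx u s x) t

/-- `f_t(x) = (n/2) u^{n-1} u_x² + (n(n+3)/(2(n+1))) u^{n+1}`. -/
noncomputable def fLoc (n : ℕ) (u : ℝ → ℝ → ℝ) (t x : ℝ) : ℝ :=
  ((n : ℝ) / 2) * u t x ^ (n - 1) * ux u t x ^ 2
    + ((n : ℝ) * ((n : ℝ) + 3) / (2 * ((n : ℝ) + 1))) * u t x ^ (n + 1)

/-- `F_t(x) = ∂ₓ (g ∗ f_t)(x)`. -/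
noncomputable def FLoc (n : ℕ) (u : ℝ → ℝ → ℝ) (t x : ℝ) : ℝ :=
  deriv (fun z => ∫ y : ℝ, g (z - y) * fLoc n u t y) x

/-- The equation (CH_n) holds pointwise at `(t,x)`. -/
def CHn (n : ℕ) (u : ℝ → ℝ → ℝ) (t x : ℝ) : Prop :=
  ut u t x - utxx u t x
      + (((n : ℝ) + 1) * ((n : ℝ) + 2) / 2) * u t x ^ n * ux u t x
    = ((n : ℝ) * ((n : ℝ) - 1) / 2) * u t x ^ (n - 2) * ux u t x ^ 3
      + 2 * (n : ℝ) * u t x ^ (n - 1) * ux u t x * uxx u t x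
      + u t x ^ n * uxxx u t x

/-- The time interval `[0, T)`, where `T ∈ (0, ∞]`. -/
def timeDomain (T : ℝ≥0∞) : Set ℝ := {t : ℝ | 0 ≤ t ∧ ENNReal.ofReal t < T}

/-- A function which is bounded, integrable, square-integrable and tends to `0` at `±∞`. -/
def Decays (w : ℝ → ℝ) : Prop :=
  (∃ C : ℝ, ∀ x : ℝ, |w x| ≤ C) ∧ Integrable w ∧
    Integrable (fun x => w x ^ 2) ∧ Tendsto w (cocompact ℝ) (𝓝 0)

/-- A classical solution of (CH_n) on `[0,T) × ℝ`. -/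
structure IsClassicalSolution (n : ℕ) (T : ℝ≥0∞) (u : ℝ → ℝ → ℝ) : Prop where
  contDiff_x : ∀ t ∈ timeDomain T, ContDiff ℝ 3 (u t)
  diff_t : ∀ x : ℝ, ∀ t ∈ timeDomain T, DifferentiableAt ℝ (fun s => u s x) t
  diff_tx : ∀ x : ℝ, ∀ t ∈ timeDomain T, DifferentiableAt ℝ (fun s => ux u s x) t
  diff_txx : ∀ x : ℝ, ∀ t ∈ timeDomain T, DifferentiableAt ℝ (fun s => uxx u s x) t
  cont_ut : ContinuousOn (fun p : ℝ × ℝ => ut u p.1 p.2) (timeDomain T ×ˢ Set.univ)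
  cont_utx : ContinuousOn (fun p : ℝ × ℝ => utx u p.1 p.2) (timeDomain T ×ˢ Set.univ)
  cont_utxx : ContinuousOn (fun p : ℝ × ℝ => utxx u p.1 p.2) (timeDomain T ×ˢ Set.univ)
  pde : ∀ t ∈ timeDomain T, ∀ x : ℝ, CHn n u t x
  nonlocal : ∀ t ∈ timeDomain T, ∀ x : ℝ,
    ut u t x + u t x ^ n * ux u t x + FLoc n u t x = 0
  decay_u : ∀ t ∈ timeDomain T, Decays (u t)
  decay_ux : ∀ t ∈ timeDomain T, Decays (ux u t)
  decay_uxx : ∀ t ∈ timeDomain T, Decays (uxx u t)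
  decay_ut : ∀ t ∈ timeDomain T, Decays (ut u t)
  sup_bound : ∀ T₀ ∈ timeDomain T, ∃ M : ℝ, ∀ t ∈ Set.Icc (0 : ℝ) T₀, ∀ x : ℝ,
    |u t x| + |ux u t x| ≤ M

/-! For odd `n` the density `f = f_{t*}` is continuous, integrable and nonnegative (both powers
`n ± 1` of `u` are even). Splitting the kernel at `x` gives
`F(x) = (-e^{-x} L(x) + e^{x} R(x)) / 2` with `L(x) = ∫_{y ≤ x} e^{y} f(y)` and
`R(x) = ∫_{y > x} e^{-y} f(y)`. If `f` vanishes on `(a,b)` then `L(b) = L(a)` and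
`R(a) = R(b)`, so `2 (F(b) - F(a)) = (e^{-a} - e^{-b}) L(a) + (e^{b} - e^{a}) R(b)` is a sum of
nonnegative terms. Hence `F(a) = F(b)` forces `L(a) = R(b) = 0`: `f` vanishes almost
everywhere, hence everywhere by continuity, and then so does `u` since
`f ≥ (n(n+3)/(2(n+1))) u^{n+1} ≥ 0`. -/

open Set

lemma hasDerivAt_integral_Iic {h : ℝ → ℝ} (hc : Continuous h)
    (hi : ∀ x, IntegrableOn h (Iic x)) (x : ℝ) :
    HasDerivAt (fun z => ∫ y in Iic z, h y) (h x) x := by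
  have hsplit : (fun z => ∫ y in Iic z, h y)
      = fun z => (∫ y in Iic 0, h y) + ∫ y in 0..z, h y := by
    funext z
    rw [← intervalIntegral.integral_Iic_sub_Iic (hi 0) (hi z), add_sub_cancel]
  rw [hsplit]
  exact (hc.integral_hasStrictDerivAt 0 x).hasDerivAt.const_add _

lemma hasDerivAt_integral_Ioi {h : ℝ → ℝ} (hc : Continuous h)
    (hi : ∀ x, IntegrableOn h (Ioi x)) (x : ℝ) :
    HasDerivAt (fun z => ∫ y in Ioi z, h y) (-h x) x := by
  have hsplit : (fun z => ∫ y in Ioi z, h y)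
      = fun z => (∫ y in Ioi 0, h y) - ∫ y in 0..z, h y := by
    funext z
    rw [← intervalIntegral.integral_Ioi_sub_Ioi' (hi 0) (hi z), sub_sub_cancel]
  rw [hsplit]
  exact (hc.integral_hasStrictDerivAt 0 x).hasDerivAt.const_sub _

lemma MeasureTheory.Integrable.integrableOn_exp_mul_Iic {f : ℝ → ℝ} (hf : Integrable f)
    (x : ℝ) :
    IntegrableOn (fun y => exp y * f y) (Iic x) := by
  refine hf.integrableOn.bdd_mul (c := exp x) continuous_exp.aestronglyMeasurable ?_
  filter_upwards [ae_restrict_mem measurableSet_Iic] with y hy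
  rw [norm_of_nonneg (exp_pos y).le]
  exact exp_le_exp.mpr hy

lemma MeasureTheory.Integrable.integrableOn_exp_neg_mul_Ioi {f : ℝ → ℝ} (hf : Integrable f)
    (x : ℝ) :
    IntegrableOn (fun y => exp (-y) * f y) (Ioi x) := by
  refine hf.integrableOn.bdd_mul (c := exp (-x))
    (continuous_exp.comp continuous_neg).aestronglyMeasurable ?_
  filter_upwards [ae_restrict_mem measurableSet_Ioi] with y hy
  rw [norm_of_nonneg (exp_pos _).le]
  exact exp_le_exp.mpr (neg_le_neg (le_of_lt hy))

lemma MeasureTheory.Integrable.g_sub_mul {f : ℝ → ℝ} (hf : Integrable f) (x : ℝ) :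
    Integrable (fun y => g (x - y) * f y) := by
  refine hf.bdd_mul (c := 1) (by unfold g; fun_prop) (Eventually.of_forall fun y => ?_)
  rw [g, norm_of_nonneg (by positivity)]
  linarith [exp_le_one_iff.mpr (neg_nonpos.mpr (abs_nonneg (x - y)))]

lemma integral_g_sub_mul {f : ℝ → ℝ} (hf : Integrable f) (x : ℝ) :
    ∫ y, g (x - y) * f y
      = (exp (-x) * (∫ y in Iic x, exp y * f y)
          + exp x * ∫ y in Ioi x, exp (-y) * f y) / 2 := by
  rw [← intervalIntegral.integral_Iic_add_Ioi (b := x) (hf.g_sub_mul x).integrableOn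
    (hf.g_sub_mul x).integrableOn, ← integral_const_mul, ← integral_const_mul,
    add_div, ← integral_div, ← integral_div]
  congr 1
  · refine setIntegral_congr_fun measurableSet_Iic fun y (hy : y ≤ x) => ?_
    rw [g, abs_of_nonneg (sub_nonneg.mpr hy), neg_sub, exp_sub, exp_neg]
    field_simp
  · refine setIntegral_congr_fun measurableSet_Ioi fun y (hy : x < y) => ?_
    rw [g, abs_of_neg (sub_neg.mpr hy), neg_neg, exp_sub, exp_neg]
    field_simp

lemma hasDerivAt_integral_g_sub_mul {f : ℝ → ℝ} (hc : Continuous f) (hf : Integrable f)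
    (x : ℝ) :
    HasDerivAt (fun z => ∫ y, g (z - y) * f y)
      ((-exp (-x) * (∫ y in Iic x, exp y * f y)
        + exp x * ∫ y in Ioi x, exp (-y) * f y) / 2) x := by
  have hleft : HasDerivAt (fun z => ∫ y in Iic z, exp y * f y) (exp x * f x) x :=
    hasDerivAt_integral_Iic (by fun_prop) hf.integrableOn_exp_mul_Iic x
  have hright : HasDerivAt (fun z => ∫ y in Ioi z, exp (-y) * f y) (-(exp (-x) * f x)) x :=
    hasDerivAt_integral_Ioi (by fun_prop) hf.integrableOn_exp_neg_mul_Ioi x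
  rw [funext (integral_g_sub_mul hf)]
  refine ((((hasDerivAt_neg' x).exp.mul hleft).add
    ((hasDerivAt_exp x).mul hright)).div_const 2).congr_deriv ?_
  ring

lemma intervalIntegral_eq_zero_of_eqOn_Ioo {h : ℝ → ℝ} {a b : ℝ} (hab : a ≤ b)
    (hvan : EqOn h 0 (Ioo a b)) : ∫ y in a..b, h y = 0 := by
  rw [intervalIntegral.integral_of_le hab, integral_Ioc_eq_integral_Ioo]
  exact setIntegral_eq_zero_of_forall_eq_zero hvan

lemma setIntegral_Iic_eq_of_eqOn_Ioo {h : ℝ → ℝ} {a b : ℝ} (hi : IntegrableOn h (Iic b))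
    (hab : a ≤ b) (hvan : EqOn h 0 (Ioo a b)) : ∫ y in Iic b, h y = ∫ y in Iic a, h y := by
  rw [← sub_eq_zero,
    intervalIntegral.integral_Iic_sub_Iic (hi.mono_set (Iic_subset_Iic.mpr hab)) hi]
  exact intervalIntegral_eq_zero_of_eqOn_Ioo hab hvan

lemma setIntegral_Ioi_eq_of_eqOn_Ioo {h : ℝ → ℝ} {a b : ℝ} (hi : IntegrableOn h (Ioi a))
    (hab : a ≤ b) (hvan : EqOn h 0 (Ioo a b)) : ∫ y in Ioi a, h y = ∫ y in Ioi b, h y := by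
  rw [← sub_eq_zero, intervalIntegral.integral_Ioi_sub_Ioi hi hab]
  exact intervalIntegral_eq_zero_of_eqOn_Ioo hab hvan

lemma ae_eq_zero_of_setIntegral_mul_eq_zero {α : Type*} [MeasurableSpace α] {μ : Measure α}
    {s : Set α} (hs : MeasurableSet s) {w f : α → ℝ} (hw : ∀ y, 0 < w y) (h0 : 0 ≤ f)
    (hi : IntegrableOn (fun y => w y * f y) s μ) (h : ∫ y in s, w y * f y ∂μ = 0) :
    ∀ᵐ y ∂μ, y ∈ s → f y = 0 := by
  have hnonneg : 0 ≤ᵐ[μ.restrict s] fun y => w y * f y :=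
    Eventually.of_forall fun y => mul_nonneg (hw y).le (h0 y)
  rw [← ae_restrict_iff' hs]
  filter_upwards [(setIntegral_eq_zero_iff_of_nonneg_ae hnonneg hi).mp h] with y hy
  exact (mul_eq_zero.mp hy).resolve_left (hw y).ne'

theorem eq_zero_of_eqOn_Ioo_of_deriv_integral_g_sub_mul_eq {f : ℝ → ℝ} (hc : Continuous f)
    (h0 : 0 ≤ f) (hf : Integrable f) {a b : ℝ} (hab : a < b) (hvan : EqOn f 0 (Ioo a b))
    (hF : deriv (fun z => ∫ y, g (z - y) * f y) a = deriv (fun z => ∫ y, g (z - y) * f y) b) :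
    f = 0 := by
  set L := ∫ y in Iic a, exp y * f y
  set R := ∫ y in Ioi b, exp (-y) * f y
  have hvan_mul (w : ℝ → ℝ) : EqOn (fun y => w y * f y) 0 (Ioo a b) := fun y hy => by
    simp [hvan hy]
  have hLb : ∫ y in Iic b, exp y * f y = L :=
    setIntegral_Iic_eq_of_eqOn_Ioo (hf.integrableOn_exp_mul_Iic b) hab.le (hvan_mul _)
  have hRa : ∫ y in Ioi a, exp (-y) * f y = R :=
    setIntegral_Ioi_eq_of_eqOn_Ioo (hf.integrableOn_exp_neg_mul_Ioi a) hab.le (hvan_mul _)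
  have hL : 0 ≤ L :=
    setIntegral_nonneg measurableSet_Iic fun y _ => mul_nonneg (exp_pos _).le (h0 y)
  have hR : 0 ≤ R :=
    setIntegral_nonneg measurableSet_Ioi fun y _ => mul_nonneg (exp_pos _).le (h0 y)
  have hexp₁ : 0 < exp (-a) - exp (-b) := sub_pos.mpr (exp_lt_exp.mpr (neg_lt_neg hab))
  have hexp₂ : 0 < exp b - exp a := sub_pos.mpr (exp_lt_exp.mpr hab)
  have hsum : (exp (-a) - exp (-b)) * L + (exp b - exp a) * R = 0 := by
    rw [(hasDerivAt_integral_g_sub_mul hc hf a).deriv,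
      (hasDerivAt_integral_g_sub_mul hc hf b).deriv, hLb, hRa] at hF
    linarith
  obtain ⟨hL0, hR0⟩ := (add_eq_zero_iff_of_nonneg (by positivity) (by positivity)).mp hsum
  have hleft := ae_eq_zero_of_setIntegral_mul_eq_zero measurableSet_Iic exp_pos h0
    (hf.integrableOn_exp_mul_Iic a) ((mul_eq_zero.mp hL0).resolve_left hexp₁.ne')
  have hright := ae_eq_zero_of_setIntegral_mul_eq_zero measurableSet_Ioi (fun y => exp_pos (-y))
    h0 (hf.integrableOn_exp_neg_mul_Ioi b) ((mul_eq_zero.mp hR0).resolve_left hexp₂.ne')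
  have hae : f =ᵐ[volume] 0 := by
    filter_upwards [hleft, hright, volume.ae_ne b] with y hyl hyr hyb
    rcases le_or_gt y a with hya | hya
    · exact hyl hya
    rcases lt_or_gt_of_ne hyb with hyb | hyb
    · exact hvan ⟨hya, hyb⟩
    · exact hyr hyb
  exact (hc.ae_eq_iff_eq volume continuous_const).mp hae

section fLoc

variable {n : ℕ} {u : ℝ → ℝ → ℝ} {t : ℝ}

lemma fLoc_summands_nonneg (hodd : Odd n) (x : ℝ) :
    0 ≤ (n : ℝ) / 2 * u t x ^ (n - 1) * ux u t x ^ 2 ∧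
      0 ≤ (n : ℝ) * ((n : ℝ) + 3) / (2 * ((n : ℝ) + 1)) * u t x ^ (n + 1) :=
  ⟨mul_nonneg (mul_nonneg (by positivity) ((Nat.Odd.sub_odd hodd odd_one).pow_nonneg _))
      (sq_nonneg _),
    mul_nonneg (by positivity) (hodd.add_one.pow_nonneg _)⟩

lemma fLoc_nonneg (hodd : Odd n) (x : ℝ) : 0 ≤ fLoc n u t x :=
  add_nonneg (fLoc_summands_nonneg hodd x).1 (fLoc_summands_nonneg hodd x).2

lemma eq_zero_of_fLoc_eq_zero (hodd : Odd n) {x : ℝ} (h : fLoc n u t x = 0) : u t x = 0 := by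
  obtain ⟨hfirst, hsecond⟩ := fLoc_summands_nonneg (u := u) (t := t) hodd x
  have hcoeff : 0 < (n : ℝ) * ((n : ℝ) + 3) / (2 * ((n : ℝ) + 1)) := by
    have : (0 : ℝ) < n := by exact_mod_cast hodd.pos
    positivity
  have hpow := ((add_eq_zero_iff_of_nonneg hfirst hsecond).mp h).2
  exact pow_eq_zero_iff n.succ_ne_zero |>.mp ((mul_eq_zero.mp hpow).resolve_left hcoeff.ne')

lemma continuous_fLoc (hu : ContDiff ℝ 1 (u t)) : Continuous (fLoc n u t) := by
  have hux : Continuous (ux u t) := hu.continuous_deriv le_rfl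
  have hu : Continuous (u t) := hu.continuous
  unfold fLoc
  fun_prop

lemma integrable_fLoc (hn : 0 < n) (hu : Continuous (u t)) (hbdd : ∃ C, ∀ x, |u t x| ≤ C)
    (hu2 : Integrable fun x => u t x ^ 2) (hux2 : Integrable fun x => ux u t x ^ 2) :
    Integrable (fLoc n u t) := by
  obtain ⟨C, hC⟩ := hbdd
  have hmeas : AEStronglyMeasurable fun x => u t x ^ (n - 1) := (hu.pow _).aestronglyMeasurable
  have hpow : ∀ᵐ x, ‖u t x ^ (n - 1)‖ ≤ C ^ (n - 1) := Eventually.of_forall fun x => by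
    rw [norm_pow, norm_eq_abs]
    exact pow_le_pow_left₀ (abs_nonneg _) (hC x) _
  have hfirst := (hux2.bdd_mul hmeas hpow).const_mul ((n : ℝ) / 2)
  have hsecond := (hu2.bdd_mul hmeas hpow).const_mul
    ((n : ℝ) * ((n : ℝ) + 3) / (2 * ((n : ℝ) + 1)))
  refine (hfirst.add hsecond).congr (Eventually.of_forall fun x => ?_)
  rw [Pi.add_apply, fLoc, show n + 1 = n - 1 + 2 by omega, pow_add]
  ring

end fLoc

theorem vanishing_on_interval_implies_trivial_general
    (n : ℕ) (hodd : Odd n) (T : ℝ≥0∞) (u : ℝ → ℝ → ℝ)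
    (hu : IsClassicalSolution n T u)
    (tstar : ℝ) (htstar : 0 < tstar) (htstarT : ENNReal.ofReal tstar < T)
    (a b : ℝ) (hab : a < b)
    (hF : FLoc n u tstar a = FLoc n u tstar b)
    (hf : ∀ x ∈ Set.Ioo a b, fLoc n u tstar x = 0) :
    (∀ x : ℝ, fLoc n u tstar x = 0) ∧ (∀ x : ℝ, u tstar x = 0) := by
  have hmem : tstar ∈ timeDomain T := ⟨htstar.le, htstarT⟩
  have hC1 : ContDiff ℝ 1 (u tstar) := (hu.contDiff_x tstar hmem).of_le (by norm_num)
  obtain ⟨hbdd, -, hu2, -⟩ := hu.decay_u tstar hmem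
  have hux2 := (hu.decay_ux tstar hmem).2.2.1
  have hzero : fLoc n u tstar = 0 :=
    eq_zero_of_eqOn_Ioo_of_deriv_integral_g_sub_mul_eq (continuous_fLoc hC1) (fLoc_nonneg hodd)
      (integrable_fLoc hodd.pos hC1.continuous hbdd hu2 hux2) hab hf hF
  exact ⟨congrFun hzero, fun x => eq_zero_of_fLoc_eq_zero hodd (congrFun hzero x)⟩

/-- If `n` is odd, `F_{t*}(a) = F_{t*}(b)` for some `a < b`, and `f_{t*}`
vanishes on `(a,b)` for some `t* ∈ (0,T)`, then `f_{t*} ≡ 0` (equivalently `u(t*,·) ≡ 0`). -/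
theorem vanishing_on_interval_implies_trivial
    (n : ℕ) (hn : 0 < n) (hodd : Odd n) (T : ℝ≥0∞) (hT : 0 < T) (u : ℝ → ℝ → ℝ)
    (hu : IsClassicalSolution n T u)
    (tstar : ℝ) (htstar : 0 < tstar) (htstarT : ENNReal.ofReal tstar < T)
    (a b : ℝ) (hab : a < b)
    (hF : FLoc n u tstar a = FLoc n u tstar b)
    (hf : ∀ x ∈ Set.Ioo a b, fLoc n u tstar x = 0) :
    (∀ x : ℝ, fLoc n u tstar x = 0) ∧ (∀ x : ℝ, u tstar x = 0) :=
  vanishing_on_interval_implies_trivial_general n hodd T u hu tstar htstar htstarT a b hab hF hf
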